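/- arXiv:2403.00465 — 3 statements merged into one kernel-verified Lean document; each statement's English description precedes it below -/
import Mathlib

section
/- Let (P,R,f) be a DPS instance with R nonempty, let F = max over e ∈ R of f(e), and define g : R → ℝ by g(e) = 1/f(e). Then: (i) if the DPS instance (P,R,f) admits a valid schedule, then the OPS instance (P,R,g) admits a valid schedule of heat at most 1; and (ii) if the DPS instance (P,R,f) admits no valid schedule, then every valid schedule for the OPS instance (P,R,g) has heat at least (F+1)/F. -/
open scoped ENNReal BigOperators

namespace PolySched

variable {V : Type*}

/-- A set of edges is a matching in `G`: all edges belong to `G` and no two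
distinct edges share an endpoint. -/
def IsMatchingIn (G : SimpleGraph V) (M : Set (Sym2 V)) : Prop :=
  M ⊆ G.edgeSet ∧ M.Pairwise fun e e' => ∀ v, v ∈ e → v ∉ e'

/-- A schedule is valid for the OPS instance on `G` if each day is a matching. -/
def OPSValid (G : SimpleGraph V) (S : ℕ → Set (Sym2 V)) : Prop :=
  ∀ t, IsMatchingIn G (S t)

/-- A schedule is valid for the DPS instance `(G, f)`. -/
def DPSValid (G : SimpleGraph V) (f : Sym2 V → ℕ) (S : ℕ → Set (Sym2 V)) : Prop :=
  OPSValid G S ∧ ∀ e ∈ G.edgeSet, ∀ t : ℕ, ∃ i < f e, e ∈ S (t + i)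

/-- Recurrence time of edge `e` under schedule `S`: the supremum of `d+1` over
all `d` such that some window of `d` consecutive days misses `e`. -/
noncomputable def recTime (S : ℕ → Set (Sym2 V)) (e : Sym2 V) : ℝ≥0∞ :=
  ⨆ d ∈ {d : ℕ | ∃ t : ℕ, ∀ i < d, e ∉ S (t + i)}, ((d : ℝ≥0∞) + 1)

/-- Heat of a schedule for the OPS instance `(G, g)`. -/
noncomputable def heat (G : SimpleGraph V) (g : Sym2 V → ℝ) (S : ℕ → Set (Sym2 V)) : ℝ≥0∞ :=
  ⨆ e ∈ G.edgeSet, ENNReal.ofReal (g e) * recTime S e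

/-! A valid DPS schedule meets every edge `e` within every window of `f e` days, so its
recurrence times are at most `f e` and its heat with rates `1 / f e` is at most `1`.
Conversely, if no DPS schedule exists, any OPS schedule misses some edge `e` during `f e`
consecutive days, so `r(e) ≥ f e + 1` and the heat is at least
`(f e + 1) / f e = 1 + 1 / f e ≥ 1 + 1 / F`. -/

variable {G : SimpleGraph V} {S : ℕ → Set (Sym2 V)} {e : Sym2 V}

theorem recTime_le_of_forall_exists_mem {n : ℕ} (h : ∀ t, ∃ i < n, e ∈ S (t + i)) :
    recTime S e ≤ n := by
  refine iSup₂_le fun d ⟨t, hmiss⟩ => ?_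
  obtain ⟨i, hi, hmem⟩ := h t
  have hd : d + 1 ≤ n := by
    by_contra! hnd
    exact hmiss i (by omega) hmem
  exact_mod_cast hd

theorem add_one_le_recTime {d t : ℕ} (h : ∀ i < d, e ∉ S (t + i)) :
    (d : ℝ≥0∞) + 1 ≤ recTime S e :=
  le_iSup₂_of_le d ⟨t, h⟩ le_rfl

theorem ofReal_one_div_natCast {n : ℕ} (hn : 0 < n) : ENNReal.ofReal (1 / n) = (n : ℝ≥0∞)⁻¹ := by
  rw [one_div, ENNReal.ofReal_inv_of_pos (by exact_mod_cast hn), ENNReal.ofReal_natCast]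

theorem ofReal_add_one_div_le {n F : ℕ} (hn : 0 < n) (hnF : n ≤ F) :
    ENNReal.ofReal ((F + 1) / F) ≤ ENNReal.ofReal (1 / n) * (n + 1) := by
  have hF : (0 : ℝ) < F := by exact_mod_cast hn.trans_le hnF
  have hrhs : ENNReal.ofReal (1 / n) * (n + 1) = ENNReal.ofReal (1 + 1 / n) := by
    rw [ofReal_one_div_natCast hn, ENNReal.ofReal_add zero_le_one (by positivity),
      ofReal_one_div_natCast hn, ENNReal.ofReal_one, mul_add, mul_one,
      ENNReal.inv_mul_cancel (by exact_mod_cast hn.ne') (ENNReal.natCast_ne_top n), add_comm]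
  rw [hrhs, add_div, div_self hF.ne']
  gcongr

theorem exists_window_not_mem_of_not_DPSValid {f : Sym2 V → ℕ} (hS : OPSValid G S)
    (hnot : ¬DPSValid G f S) : ∃ e ∈ G.edgeSet, ∃ t, ∀ i < f e, e ∉ S (t + i) := by
  simpa [DPSValid, hS] using hnot

variable {f : Sym2 V → ℕ} {g : Sym2 V → ℝ}

theorem heat_le_one_of_DPSValid (hf : ∀ e ∈ G.edgeSet, 0 < f e)
    (hg : ∀ e ∈ G.edgeSet, g e = 1 / (f e : ℝ)) (hS : DPSValid G f S) : heat G g S ≤ 1 := by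
  refine iSup₂_le fun e he => ?_
  calc ENNReal.ofReal (g e) * recTime S e
      ≤ (f e : ℝ≥0∞)⁻¹ * f e := by
        rw [hg e he, ofReal_one_div_natCast (hf e he)]
        gcongr
        exact recTime_le_of_forall_exists_mem (hS.2 e he)
    _ = 1 := ENNReal.inv_mul_cancel (by exact_mod_cast (hf e he).ne') (ENNReal.natCast_ne_top _)

theorem ofReal_le_heat_of_not_DPSValid (hf : ∀ e ∈ G.edgeSet, 0 < f e) {F : ℕ}
    (hF : ∀ e ∈ G.edgeSet, f e ≤ F) (hg : ∀ e ∈ G.edgeSet, g e = 1 / (f e : ℝ))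
    (hS : OPSValid G S) (hnot : ¬DPSValid G f S) :
    ENNReal.ofReal (((F : ℝ) + 1) / F) ≤ heat G g S := by
  obtain ⟨e, he, t, hmiss⟩ := exists_window_not_mem_of_not_DPSValid hS hnot
  calc ENNReal.ofReal (((F : ℝ) + 1) / F)
      ≤ ENNReal.ofReal (g e) * ((f e : ℝ≥0∞) + 1) := by
        rw [hg e he]
        exact ofReal_add_one_div_le (hf e he) (hF e he)
    _ ≤ ENNReal.ofReal (g e) * recTime S e := by gcongr; exact add_one_le_recTime hmiss
    _ ≤ heat G g S := le_iSup₂_of_le e he le_rfl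

theorem dps_to_ops_general {V : Type*} (G : SimpleGraph V)
    (f : Sym2 V → ℕ) (hf : ∀ e ∈ G.edgeSet, 0 < f e)
    (F : ℕ) (hF : IsGreatest (f '' G.edgeSet) F)
    (g : Sym2 V → ℝ) (hg : ∀ e ∈ G.edgeSet, g e = 1 / (f e : ℝ)) :
    ((∃ S, DPSValid G f S) → ∃ S, OPSValid G S ∧ heat G g S ≤ 1) ∧
    ((¬ ∃ S, DPSValid G f S) → ∀ S, OPSValid G S →
        ENNReal.ofReal (((F : ℝ) + 1) / F) ≤ heat G g S) :=
  ⟨fun ⟨S, hS⟩ => ⟨S, hS.1, heat_le_one_of_DPSValid hf hg hS⟩,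
    fun hinf S hS => ofReal_le_heat_of_not_DPSValid hf (fun e he => hF.2 ⟨e, he, rfl⟩) hg hS
      fun hDPS => hinf ⟨S, hDPS⟩⟩

/-- DPS-to-OPS conversion (Lemma "DPS to OPS").
With growth rates `g e = 1 / f e` and `F` the maximum frequency:
(i) if the DPS instance is feasible, the OPS instance has a schedule of heat ≤ 1;
(ii) if it is infeasible, every valid OPS schedule has heat ≥ (F+1)/F. -/
theorem dps_to_ops {V : Type*} (G : SimpleGraph V)
    (f : Sym2 V → ℕ) (hf : ∀ e ∈ G.edgeSet, 0 < f e)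
    (hne : G.edgeSet.Nonempty)
    (F : ℕ) (hF : IsGreatest (f '' G.edgeSet) F)
    (g : Sym2 V → ℝ) (hg : ∀ e ∈ G.edgeSet, g e = 1 / (f e : ℝ)) :
    ((∃ S, DPSValid G f S) → ∃ S, OPSValid G S ∧ heat G g S ≤ 1) ∧
    ((¬ ∃ S, DPSValid G f S) → ∀ S, OPSValid G S →
        ENNReal.ofReal (((F : ℝ) + 1) / F) ≤ heat G g S) :=
  dps_to_ops_general G f hf F hF g hg

end PolySched
end

section
/- Let (P,R,g) be an OPS instance with R nonempty, let g_min = min over e ∈ R of g(e), g_max = max over e ∈ R of g(e), and let Δ ≥ 1 be the maximum degree of the graph (P,R). Then there exists a valid schedule S such that h(S) ≤ (Δ+1)·g_max, and consequently for every valid schedule S' one has h(S) ≤ min{((Δ+1)/Δ)·(g_max/g_min), Δ+1} · h(S'). -/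
open scoped ENNReal BigOperators

namespace PolySched

variable {V : Type*}

open scoped Classical

variable {n : ℕ}

/-- partial proper edge coloring encoded as symmetric matrix -/
def PropColor (G : SimpleGraph V) (C : V → V → Option (Fin n)) : Prop :=
  (∀ u v, C u v = C v u) ∧ (∀ u v, C u v ≠ none → G.Adj u v) ∧
  (∀ u v w, C u v ≠ none → C u v = C u w → v = w)

def FreeC (C : V → V → Option (Fin n)) (v : V) (c : Fin n) : Prop := ∀ w, C v w ≠ some c

theorem PropColor.ne_self {G : SimpleGraph V} {C : V → V → Option (Fin n)}
    (hC : PropColor G C) {u v : V} (h : C u v ≠ none) : u ≠ v :=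
  fun huv => G.loopless.irrefl u (hC.2.1 u u (huv ▸ h))

/-- free colors exist -/
theorem exists_free [Fintype V] {G : SimpleGraph V} [DecidableRel G.Adj]
    {C : V → V → Option (Fin n)} (hC : PropColor G C) (v : V)
    (hn : G.maxDegree < n) : ∃ c, FreeC C v c := by
  by_contra h
  push_neg at h
  simp only [FreeC, not_forall, not_not] at h
  choose f hf using h
  have hinj : Function.Injective f := by
    intro c c' hcc
    have : (some c : Option (Fin n)) = some c' := (hf c).symm.trans (hcc ▸ hf c')
    exact Option.some_injective _ this
  have hmem : ∀ c, f c ∈ G.neighborFinset v := by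
    intro c
    rw [SimpleGraph.mem_neighborFinset]
    exact hC.2.1 v (f c) (by rw [hf c]; exact Option.some_ne_none _)
  have := Finset.card_le_card_of_injOn (s := Finset.univ) f (fun c _ => hmem c) hinj.injOn
  simp only [Finset.card_univ, Fintype.card_fin] at this
  rw [SimpleGraph.card_neighborFinset_eq_degree] at this
  have := this.trans (G.degree_le_maxDegree v)
  omega

/-- update a symmetric entry -/
noncomputable def upd (C : V → V → Option (Fin n)) (a b : V) (o : Option (Fin n)) :
    V → V → Option (Fin n) :=
  fun u w => if (u = a ∧ w = b) ∨ (u = b ∧ w = a) then o else C u w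

theorem upd_self (C : V → V → Option (Fin n)) (a b : V) (o : Option (Fin n)) :
    upd C a b o a b = o := by simp [upd]

theorem upd_of_ne (C : V → V → Option (Fin n)) {a b u w : V} (o : Option (Fin n))
    (h : ¬((u = a ∧ w = b) ∨ (u = b ∧ w = a))) : upd C a b o u w = C u w := by
  simp [upd, h]

theorem PropColor.upd_none {G : SimpleGraph V} {C : V → V → Option (Fin n)}
    (hC : PropColor G C) (a b : V) : PropColor G (upd C a b none) := by
  refine ⟨fun u v => ?_, fun u v h => ?_, fun u v w h he => ?_⟩
  · unfold upd; split_ifs with h1 h2 h2 <;> first | rfl | tauto | exact hC.1 u v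
  · unfold upd at h; split_ifs at h with h1
    · exact absurd rfl h
    · exact hC.2.1 u v h
  · by_cases p1 : (u = a ∧ v = b) ∨ (u = b ∧ v = a)
    · exact absurd (by simp [upd, p1]) h
    · by_cases p2 : (u = a ∧ w = b) ∨ (u = b ∧ w = a)
      · rw [upd_of_ne C none p1] at h he; rw [upd] at he; simp [p2] at he
        exact absurd he h
      · rw [upd_of_ne C none p1] at h he; rw [upd_of_ne C none p2] at he
        exact hC.2.2 u v w h he

theorem PropColor.upd_some {G : SimpleGraph V} {C : V → V → Option (Fin n)}
    (hC : PropColor G C) {a b : V} {c : Fin n} (hab : G.Adj a b)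
    (ha : FreeC C a c) (hb : FreeC C b c) : PropColor G (upd C a b (some c)) := by
  have hne : a ≠ b := hab.ne
  refine ⟨fun u v => ?_, fun u v h => ?_, fun u v w h he => ?_⟩
  · unfold upd; split_ifs with h1 h2 h2 <;> first | rfl | tauto | exact hC.1 u v
  · unfold upd at h; split_ifs at h with h1
    · rcases h1 with ⟨rfl, rfl⟩ | ⟨rfl, rfl⟩
      · exact hab
      · exact hab.symm
    · exact hC.2.1 u v h
  · by_cases p1 : (u = a ∧ v = b) ∨ (u = b ∧ v = a) <;>
      by_cases p2 : (u = a ∧ w = b) ∨ (u = b ∧ w = a)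
    · rcases p1 with ⟨rfl, rfl⟩ | ⟨rfl, rfl⟩ <;> rcases p2 with ⟨h2a, rfl⟩ | ⟨h2a, rfl⟩ <;>
        first | rfl | (exact absurd h2a hne) | (exact absurd h2a hne.symm)
    · simp only [upd] at he; rw [if_pos p1, if_neg p2] at he
      rcases p1 with ⟨rfl, rfl⟩ | ⟨rfl, rfl⟩
      · exact absurd he.symm (ha w)
      · exact absurd he.symm (hb w)
    · simp only [upd] at he; rw [if_neg p1, if_pos p2] at he
      exfalso
      rcases p2 with ⟨rfl, rfl⟩ | ⟨rfl, rfl⟩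
      · exact ha v he
      · exact hb v he
    · rw [upd_of_ne C _ p1] at h he; rw [upd_of_ne C _ p2] at he
      exact hC.2.2 u v w h he


section Swap

variable {G : SimpleGraph V} {C : V → V → Option (Fin n)} {α β : Fin n}

/-- Kempe graph of colors α, β -/
def kgraph (C : V → V → Option (Fin n)) (α β : Fin n) : SimpleGraph V where
  Adj u v := u ≠ v ∧ ((C u v = some α ∨ C u v = some β) ∨ (C v u = some α ∨ C v u = some β))
  symm := ⟨by intro u v ⟨h1, h2⟩; exact ⟨h1.symm, h2.symm⟩⟩
  loopless := ⟨fun v h => h.1 rfl⟩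

theorem kgraph_adj (hsymm : ∀ u v, C u v = C v u) {u v : V} :
    (kgraph C α β).Adj u v ↔ u ≠ v ∧ (C u v = some α ∨ C u v = some β) := by
  constructor
  · rintro ⟨h1, h2 | h2⟩
    · exact ⟨h1, h2⟩
    · exact ⟨h1, by rw [hsymm u v]; exact h2⟩
  · rintro ⟨h1, h2⟩; exact ⟨h1, Or.inl h2⟩

/-- color transposition on Option -/
def tw (α β : Fin n) : Option (Fin n) → Option (Fin n) := fun o =>
  if o = some α then some β else if o = some β then some α else o

theorem tw_none : tw α β none = none := by simp [tw]

theorem tw_eq_none_iff {o : Option (Fin n)} : tw α β o = none ↔ o = none := by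
  unfold tw; split_ifs <;> simp_all

theorem tw_invol (o : Option (Fin n)) : tw α β (tw α β o) = o := by
  unfold tw; split_ifs <;> simp_all

theorem tw_injective : Function.Injective (tw α β) := by
  intro a b h
  rw [← tw_invol (α := α) (β := β) a, h, tw_invol]

theorem tw_eq_some_alpha (hab : α ≠ β) {o : Option (Fin n)} :
    tw α β o = some α ↔ o = some β := by
  unfold tw; split_ifs <;> simp_all [hab.symm]

theorem tw_eq_of_notin {γ : Fin n} (h1 : γ ≠ α) (h2 : γ ≠ β) {o : Option (Fin n)} :
    tw α β o = some γ ↔ o = some γ := by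
  unfold tw; split_ifs <;> simp_all
  · exact iff_of_false (fun h => h2 h.symm) (fun h => h1 h.symm)
  · exact iff_of_false (fun h => h1 h.symm) (fun h => h2 h.symm)

/-- swap colors α β on the vertex set K -/
noncomputable def swapC (C : V → V → Option (Fin n)) (α β : Fin n) (K : Set V) :
    V → V → Option (Fin n) :=
  fun u v => if u ∈ K ∧ v ∈ K then tw α β (C u v) else C u v

variable {K : Set V}

/-- closure hypothesis -/
def KClosed (C : V → V → Option (Fin n)) (α β : Fin n) (K : Set V) : Prop :=
  ∀ u ∈ K, ∀ v, (C u v = some α ∨ C u v = some β) → v ∈ K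

theorem swapC_of_not_mem (hu : u ∉ K) (v : V) : swapC C α β K u v = C u v := by
  simp [swapC, hu]

theorem swapC_of_mem (hK : KClosed C α β K) (hu : u ∈ K) (v : V) :
    swapC C α β K u v = tw α β (C u v) := by
  unfold swapC
  by_cases hv : v ∈ K
  · simp [hu, hv]
  · have : ¬(C u v = some α ∨ C u v = some β) := fun h => hv (hK u hu v h)
    push_neg at this
    simp [hu, hv, tw, this.1, this.2]

theorem swapC_proper (hC : PropColor G C) (hK : KClosed C α β K) :
    PropColor G (swapC C α β K) := by
  refine ⟨fun u v => ?_, fun u v h => ?_, fun u v w h he => ?_⟩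
  · unfold swapC
    by_cases h1 : u ∈ K ∧ v ∈ K
    · simp [h1, h1.1, h1.2, hC.1 u v]
    · have h2 : ¬(v ∈ K ∧ u ∈ K) := fun h => h1 ⟨h.2, h.1⟩
      simp [h1, h2, hC.1 u v]
  · by_cases hu : u ∈ K
    · rw [swapC_of_mem hK hu] at h
      exact hC.2.1 u v (fun hh => h (by rw [hh, tw_none]))
    · rw [swapC_of_not_mem hu] at h
      exact hC.2.1 u v h
  · by_cases hu : u ∈ K
    · rw [swapC_of_mem hK hu] at h he
      rw [swapC_of_mem hK hu] at he
      have := tw_injective (α := α) (β := β) he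
      refine hC.2.2 u v w ?_ this
      intro hn
      exact h (by rw [hn, tw_none])
    · rw [swapC_of_not_mem hu] at h he
      rw [swapC_of_not_mem hu] at he
      exact hC.2.2 u v w h he

theorem swapC_free_alpha (hK : KClosed C α β K) (hab : α ≠ β) {u : V} (hu : u ∈ K)
    (hfree : FreeC C u β) : FreeC (swapC C α β K) u α := by
  intro w hw
  rw [swapC_of_mem hK hu, tw_eq_some_alpha hab] at hw
  exact hfree w hw

theorem swapC_free_other (hK : KClosed C α β K) {γ : Fin n} (h1 : γ ≠ α) (h2 : γ ≠ β)
    {u : V} (hfree : FreeC C u γ) : FreeC (swapC C α β K) u γ := by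
  intro w hw
  by_cases hu : u ∈ K
  · rw [swapC_of_mem hK hu, tw_eq_of_notin h1 h2] at hw
    exact hfree w hw
  · rw [swapC_of_not_mem hu] at hw
    exact hfree w hw

theorem swapC_none_iff {u v : V} : swapC C α β K u v = none ↔ C u v = none := by
  unfold swapC; split_ifs
  · exact tw_eq_none_iff
  · rfl

/-- degree bound in a subgraph of the Kempe graph -/
theorem kdeg_le (hC : PropColor G C) (H' : SimpleGraph V)
    (hle : ∀ a b, H'.Adj a b → (kgraph C α β).Adj a b)
    [Fintype V] [DecidableRel H'.Adj] (a : V) : H'.degree a ≤ 2 := by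
  classical
  rw [← SimpleGraph.card_neighborFinset_eq_degree]
  have : ∀ b ∈ H'.neighborFinset a, (fun b => C a b) b ∈ ({some α, some β} : Finset (Option (Fin n))) := by
    intro b hb
    rw [SimpleGraph.mem_neighborFinset] at hb
    have := ((kgraph_adj hC.1).mp (hle a b hb)).2
    simpa using this
  have hinj : Set.InjOn (fun b => C a b) (H'.neighborFinset a) := by
    intro b hb b' hb' he
    rw [Finset.mem_coe, SimpleGraph.mem_neighborFinset] at hb
    have hne : C a b ≠ none := by
      rcases ((kgraph_adj hC.1).mp (hle a b hb)).2 with h | h <;> simp [h]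
    exact hC.2.2 a b b' hne he
  have := Finset.card_le_card_of_injOn _ this hinj
  calc (H'.neighborFinset a).card ≤ _ := this
    _ ≤ 2 := Finset.card_insert_le _ _ |>.trans (by simp)

theorem kdeg_le_one (hC : PropColor G C) (H' : SimpleGraph V)
    (hle : ∀ a b, H'.Adj a b → (kgraph C α β).Adj a b)
    [Fintype V] [DecidableRel H'.Adj] (a : V)
    (hfree : FreeC C a α ∨ FreeC C a β) : H'.degree a ≤ 1 := by
  classical
  rw [← SimpleGraph.card_neighborFinset_eq_degree]
  obtain hf | hf := hfree
  case _ =>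
    have : ∀ b ∈ H'.neighborFinset a, (fun b => C a b) b ∈ ({some β} : Finset (Option (Fin n))) := by
      intro b hb
      rw [SimpleGraph.mem_neighborFinset] at hb
      rcases ((kgraph_adj hC.1).mp (hle a b hb)).2 with h | h
      · exact absurd h (hf b)
      · simp [h]
    have hinj : Set.InjOn (fun b => C a b) (H'.neighborFinset a) := by
      intro b hb b' hb' he
      rw [Finset.mem_coe, SimpleGraph.mem_neighborFinset] at hb
      have hne : C a b ≠ none := by
        rcases ((kgraph_adj hC.1).mp (hle a b hb)).2 with h | h <;> simp [h]
      exact hC.2.2 a b b' hne he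
    have := Finset.card_le_card_of_injOn _ this hinj
    simpa using this
  case _ =>
    have : ∀ b ∈ H'.neighborFinset a, (fun b => C a b) b ∈ ({some α} : Finset (Option (Fin n))) := by
      intro b hb
      rw [SimpleGraph.mem_neighborFinset] at hb
      rcases ((kgraph_adj hC.1).mp (hle a b hb)).2 with h | h
      · simp [h]
      · exact absurd h (hf b)
    have hinj : Set.InjOn (fun b => C a b) (H'.neighborFinset a) := by
      intro b hb b' hb' he
      rw [Finset.mem_coe, SimpleGraph.mem_neighborFinset] at hb
      have hne : C a b ≠ none := by
        rcases ((kgraph_adj hC.1).mp (hle a b hb)).2 with h | h <;> simp [h]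
      exact hC.2.2 a b b' hne he
    have := Finset.card_le_card_of_injOn _ this hinj
    simpa using this

/-- The crux: in the Kempe graph, `x` (missing α) cannot reach two distinct
vertices `u`, `v` (each missing β), all three distinct. -/
theorem crux [Fintype V] (hC : PropColor G C) (hab : α ≠ β) {x u v : V}
    (hux : u ≠ x) (hvx : v ≠ x) (huv : u ≠ v)
    (hx : FreeC C x α) (hu : FreeC C u β) (hv : FreeC C v β) :
    ¬((kgraph C α β).Reachable x u ∧ (kgraph C α β).Reachable x v) := by
  classical
  rintro ⟨hru, hrv⟩
  set H := kgraph C α β with hH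
  -- restricted graph
  let H' : SimpleGraph V :=
    { Adj := fun a b => H.Adj a b ∧ H.Reachable x a
      symm := ⟨by
        rintro a b ⟨h1, h2⟩
        exact ⟨h1.symm, h2.trans h1.reachable⟩⟩
      loopless := ⟨fun a h => H.loopless.irrefl a h.1⟩ }
  haveI : DecidableRel H'.Adj := Classical.decRel _
  have hle : ∀ a b, H'.Adj a b → H.Adj a b := fun a b h => h.1
  -- the component as a finset
  let K : Finset V := Finset.univ.filter (fun a => H.Reachable x a)
  have hmemK : ∀ a, a ∈ K ↔ H.Reachable x a := by
    intro a; simp [K]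
  have hxK : x ∈ K := (hmemK x).mpr (SimpleGraph.Reachable.refl x)
  have huK : u ∈ K := (hmemK u).mpr hru
  have hvK : v ∈ K := (hmemK v).mpr hrv
  -- degrees vanish off K
  have hdeg0 : ∀ a ∉ K, H'.degree a = 0 := by
    intro a ha
    rw [hmemK] at ha
    rw [← SimpleGraph.card_neighborFinset_eq_degree, Finset.card_eq_zero]
    ext b
    simp only [SimpleGraph.mem_neighborFinset, Finset.notMem_empty, iff_false]
    exact fun h => ha h.2
  -- handshake
  have hsum : ∑ a ∈ K, H'.degree a = 2 * H'.edgeFinset.card := by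
    rw [← SimpleGraph.sum_degrees_eq_twice_card_edges]
    exact Finset.sum_subset (Finset.subset_univ K)
      (fun a _ ha => hdeg0 a ha)
  -- lower bound on edges: injection from K.erase x
  have hpred : ∀ a ∈ K.erase x, ∃ b, H'.Adj b a ∧ H.dist x b + 1 = H.dist x a := by
    intro a ha
    rw [Finset.mem_erase, hmemK] at ha
    obtain ⟨hax, hreach⟩ := ha
    obtain ⟨p, hp⟩ := hreach.exists_walk_length_eq_dist
    obtain ⟨b, hadj, q', hq⟩ := SimpleGraph.Walk.exists_eq_cons_of_ne hax p.reverse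
    refine ⟨b, ⟨hadj.symm, SimpleGraph.Walk.reachable q'.reverse⟩, ?_⟩
    have hlen : q'.length + 1 = H.dist x a := by
      have := congrArg SimpleGraph.Walk.length hq
      simp only [SimpleGraph.Walk.length_reverse, SimpleGraph.Walk.length_cons] at this
      omega
    have h1 : H.dist x b ≤ q'.length := by
      have := H.dist_le q'.reverse
      simpa using this
    have h2 : H.dist x a ≤ H.dist x b + 1 := by
      obtain ⟨w, hw⟩ := (SimpleGraph.Walk.reachable q'.reverse).exists_walk_length_eq_dist
      have := H.dist_le (w.append hadj.symm.toWalk)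
      simpa [hw] using this
    omega
  choose pb hpb using hpred
  have hinj : ∀ a ∈ K.erase x, ∀ a' ∈ K.erase x,
      (fun a => if h : a ∈ K.erase x then s(pb a h, a) else s(a, a)) a =
      (fun a => if h : a ∈ K.erase x then s(pb a h, a) else s(a, a)) a' → a = a' := by
    intro a ha a' ha' he
    simp only [dif_pos ha, dif_pos ha'] at he
    rw [Sym2.eq_iff] at he
    rcases he with ⟨h1, h2⟩ | ⟨h1, h2⟩
    · exact h2
    · exfalso
      have e1 := (hpb a ha).2
      have e2 := (hpb a' ha').2
      rw [h1] at e1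
      rw [← h2] at e2
      omega
  have hmemf : ∀ a ∈ K.erase x,
      (fun a => if h : a ∈ K.erase x then s(pb a h, a) else s(a, a)) a ∈ H'.edgeFinset := by
    intro a ha
    simp only [dif_pos ha]
    rw [SimpleGraph.mem_edgeFinset, SimpleGraph.mem_edgeSet]
    exact (hpb a ha).1
  have hcard : K.card - 1 ≤ H'.edgeFinset.card := by
    have := Finset.card_le_card_of_injOn _ hmemf (fun a ha a' ha' he => hinj a ha a' ha' he)
    rwa [Finset.card_erase_of_mem hxK] at this
  -- degree bounds
  have hd2 : ∀ a, H'.degree a ≤ 2 := kdeg_le hC H' hle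
  have hdx : H'.degree x ≤ 1 := kdeg_le_one hC H' hle x (Or.inl hx)
  have hdu : H'.degree u ≤ 1 := kdeg_le_one hC H' hle u (Or.inr hu)
  have hdv : H'.degree v ≤ 1 := kdeg_le_one hC H' hle v (Or.inr hv)
  -- sum bound
  let T : Finset V := {x, u, v}
  have hTK : T ⊆ K := by
    intro a ha
    simp only [T, Finset.mem_insert, Finset.mem_singleton] at ha
    rcases ha with rfl | rfl | rfl <;> assumption
  have hTcard : T.card = 3 := by
    rw [Finset.card_insert_of_notMem (by simp [hux.symm, hvx.symm]),
      Finset.card_insert_of_notMem (by simp [huv]), Finset.card_singleton]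
  have hsumT : ∑ a ∈ T, H'.degree a ≤ 3 := by
    rw [Finset.sum_insert (by simp [hux.symm, hvx.symm]),
      Finset.sum_insert (by simp [huv]), Finset.sum_singleton]
    omega
  have hsplit : ∑ a ∈ K, H'.degree a = ∑ a ∈ K \ T, H'.degree a + ∑ a ∈ T, H'.degree a :=
    (Finset.sum_sdiff hTK).symm
  have hbound : ∑ a ∈ K \ T, H'.degree a ≤ 2 * (K.card - 3) := by
    calc ∑ a ∈ K \ T, H'.degree a ≤ ∑ _a ∈ K \ T, 2 := Finset.sum_le_sum (fun a _ => hd2 a)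
      _ = 2 * (K \ T).card := by rw [Finset.sum_const, smul_eq_mul, mul_comm]
      _ = 2 * (K.card - 3) := by rw [Finset.card_sdiff_of_subset hTK, hTcard]
  have hK3 : 3 ≤ K.card := by
    calc 3 = T.card := hTcard.symm
      _ ≤ K.card := Finset.card_le_card hTK
  omega

end Swap

section Fan

variable {G : SimpleGraph V}

/-- unordered pair equality predicate -/
def Pr (u w a b : V) : Prop := (u = a ∧ w = b) ∨ (u = b ∧ w = a)

/-- A fan at `x` starting from `y = f 0`, of length `k+1`. -/
def IsFan (G : SimpleGraph V) (C : V → V → Option (Fin n)) (x : V) (k : ℕ) (f : ℕ → V) : Prop :=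
  (∀ i ≤ k, ∀ j ≤ k, f i = f j → i = j) ∧ (∀ i ≤ k, G.Adj x (f i)) ∧
  (∀ i < k, ∃ c, C x (f (i+1)) = some c ∧ FreeC C (f i) c)

theorem IsFan.mono {C : V → V → Option (Fin n)} {x : V} {k k' : ℕ} {f : ℕ → V}
    (h : IsFan G C x k f) (hk : k' ≤ k) : IsFan G C x k' f :=
  ⟨fun i hi j hj => h.1 i (hi.trans hk) j (hj.trans hk),
   fun i hi => h.2.1 i (hi.trans hk),
   fun i hi => h.2.2 i (hi.trans_le hk)⟩

/-- Rotating a fan: transfers the uncolored slot from `(x, f 0)` to `(x, f k)`,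
preserving the colors present at `x` and only removing colors at `f k`. -/
theorem rotate {x : V} :
    ∀ (k : ℕ) (C : V → V → Option (Fin n)) (f : ℕ → V),
      PropColor G C → IsFan G C x k f → C x (f 0) = none →
    ∃ C', PropColor G C' ∧
      (∀ u w, C' u w = none ↔ ((C u w = none ∧ ¬ Pr u w x (f 0)) ∨ Pr u w x (f k))) ∧
      (∀ c, FreeC C' x c ↔ FreeC C x c) ∧
      (∀ c, FreeC C (f k) c → FreeC C' (f k) c) := by
  intro k
  induction k with
  | zero =>
    intro C f hC hfan h0
    refine ⟨C, hC, ?_, fun c => Iff.rfl, fun c h => h⟩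
    intro u w
    constructor
    · intro h
      by_cases hp : Pr u w x (f 0)
      · exact Or.inr hp
      · exact Or.inl ⟨h, hp⟩
    · rintro (⟨h, -⟩ | hp)
      · exact h
      · rcases hp with ⟨h1, h2⟩ | ⟨h1, h2⟩
        · rw [h1, h2]; exact h0
        · rw [h1, h2, hC.1 (f 0) x]; exact h0
  | succ k ih =>
    intro C f hC hfan h0
    obtain ⟨c₁, hc₁, hfree₁⟩ := hfan.2.2 0 (Nat.succ_pos k)
    have hxf0 : x ≠ f 0 := (hfan.2.1 0 (Nat.zero_le _)).ne
    have hxf1 : x ≠ f 1 := (hfan.2.1 1 (by omega)).ne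
    have hf01 : f 0 ≠ f 1 := fun h => by
      have := hfan.1 0 (by omega) 1 (by omega) h; omega
    -- step: move c₁ from (x, f 1) to (x, f 0)
    set D := upd C x (f 1) none with hD
    set C₁ := upd D x (f 0) (some c₁) with hC₁def
    have hDprop : PropColor G D := hC.upd_none x (f 1)
    have hDfree_x : FreeC D x c₁ := by
      intro w hw
      by_cases hp : (x = x ∧ w = f 1) ∨ (x = f 1 ∧ w = x)
      · rcases hp with ⟨-, rfl⟩ | ⟨h, -⟩
        · rw [hD, upd_self] at hw; exact nomatch hw
        · exact hxf1 h
      · rw [hD, upd_of_ne C none hp] at hw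
        have : w = f 1 := hC.2.2 x w (f 1) (by rw [hw]; simp) (hw.trans hc₁.symm)
        exact hp (Or.inl ⟨rfl, this⟩)
    have hDfree_f0 : FreeC D (f 0) c₁ := by
      intro w hw
      by_cases hp : (f 0 = x ∧ w = f 1) ∨ (f 0 = f 1 ∧ w = x)
      · rcases hp with ⟨h, -⟩ | ⟨h, -⟩
        · exact hxf0 h.symm
        · exact hf01 h
      · rw [hD, upd_of_ne C none hp] at hw
        exact hfree₁ w hw
    have hC₁prop : PropColor G C₁ :=
      hDprop.upd_some (hfan.2.1 0 (Nat.zero_le _)) hDfree_x hDfree_f0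
    -- values of C₁
    have hC₁_eq : ∀ u w, ¬ Pr u w x (f 0) → ¬ Pr u w x (f 1) → C₁ u w = C u w := by
      intro u w h1 h2
      rw [hC₁def, upd_of_ne D (some c₁) h1, hD, upd_of_ne C none h2]
    have hC₁_f0 : C₁ x (f 0) = some c₁ := by rw [hC₁def]; exact upd_self D x (f 0) _
    have hC₁_f1 : C₁ x (f 1) = none := by
      rw [hC₁def, upd_of_ne D (some c₁) (by
        push_neg
        constructor
        · intro _; exact fun hh => hf01 hh.symm
        · intro h; exact absurd h hxf0), hD]
      exact upd_self C x (f 1) none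
    -- the shifted fan
    have hfan' : IsFan G C₁ x k (fun i => f (i + 1)) := by
      refine ⟨fun i hi j hj h => ?_, fun i hi => hfan.2.1 (i+1) (by omega), fun i hi => ?_⟩
      · have := hfan.1 (i+1) (by omega) (j+1) (by omega) h; omega
      · obtain ⟨c, hc, hfc⟩ := hfan.2.2 (i+1) (by omega)
        refine ⟨c, ?_, ?_⟩
        · rw [hC₁_eq]
          · exact hc
          · rintro (⟨-, h⟩ | ⟨h, -⟩)
            · have := hfan.1 (i+2) (by omega) 0 (by omega) h; omega
            · exact hxf0 h
          · rintro (⟨-, h⟩ | ⟨h, -⟩)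
            · have := hfan.1 (i+2) (by omega) 1 (by omega) h; omega
            · exact hxf1 h
        · -- freeness at f (i+1) preserved from C to C₁
          intro w hw
          have hw : C₁ (f (i+1)) w = some c := hw
          by_cases hp : Pr (f (i+1)) w x (f 0)
          · rcases hp with ⟨h, -⟩ | ⟨h, -⟩
            · exact (hfan.2.1 (i+1) (by omega)).ne' h
            · have := hfan.1 (i+1) (by omega) 0 (by omega) h; omega
          · by_cases hq : Pr (f (i+1)) w x (f 1)
            · rcases hq with ⟨h, -⟩ | ⟨h, hw2⟩
              · have hxi : f (i+1) = x := h
                exact absurd hxi.symm (hfan.2.1 (i+1) (by omega)).ne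
              · -- f (i+1) = f 1, so i = 0 and the entry became none
                rw [h, hw2] at hw
                rw [hC₁prop.1 (f 1) x, hC₁_f1] at hw
                exact nomatch hw
            · rw [hC₁_eq _ _ hp hq] at hw
              exact hfc w hw
    have h0' : C₁ x ((fun i => f (i+1)) 0) = none := hC₁_f1
    obtain ⟨C₂, hC₂prop, hC₂dom, hC₂x, hC₂last⟩ := ih C₁ (fun i => f (i+1)) hC₁prop hfan' h0'
    have hone : ∀ u w, C₁ u w = none ↔
        (Pr u w x (f 1) ∨ (C u w = none ∧ ¬ Pr u w x (f 0))) := by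
      intro u w
      by_cases hp0 : Pr u w x (f 0)
      · have hval : C₁ u w = some c₁ := by
          rcases hp0 with ⟨h1, h2⟩ | ⟨h1, h2⟩
          · rw [h1, h2]; exact hC₁_f0
          · rw [h1, h2, hC₁prop.1 (f 0) x]; exact hC₁_f0
        rw [hval]
        simp only [reduceCtorEq, false_iff]
        rintro (hp1 | ⟨-, h⟩)
        · rcases hp0 with ⟨g1, g2⟩ | ⟨g1, g2⟩ <;>
            rcases hp1 with ⟨h1, h2⟩ | ⟨h1, h2⟩
          · exact hf01 (g2.symm.trans h2)
          · exact hxf1 (g1.symm.trans h1)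
          · exact hxf0 (h1.symm.trans g1)
          · exact hf01 (g1.symm.trans h1)
        · exact h hp0
      · by_cases hp1 : Pr u w x (f 1)
        · have hval : C₁ u w = none := by
            rcases hp1 with ⟨h1, h2⟩ | ⟨h1, h2⟩
            · rw [h1, h2]; exact hC₁_f1
            · rw [h1, h2, hC₁prop.1 (f 1) x]; exact hC₁_f1
          rw [hval]
          simp [hp1]
        · rw [hC₁_eq u w hp0 hp1]
          simp [hp0, hp1]
    have himp1 : ∀ u w, Pr u w x (f 1) → C u w ≠ none := by
      intro u w hp1
      rcases hp1 with ⟨rfl, rfl⟩ | ⟨rfl, rfl⟩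
      · rw [hc₁]; exact Option.some_ne_none _
      · rw [hC.1, hc₁]; exact Option.some_ne_none _
    refine ⟨C₂, hC₂prop, ?_, ?_, ?_⟩
    · -- domain
      intro u w
      rw [hC₂dom u w, hone u w]
      have := himp1 u w
      constructor
      · rintro (⟨hp1 | ⟨h1, h2⟩, h3⟩ | hp)
        · exact absurd hp1 h3
        · exact Or.inl ⟨h1, h2⟩
        · exact Or.inr hp
      · rintro (⟨h1, h2⟩ | hp)
        · exact Or.inl ⟨Or.inr ⟨h1, h2⟩, fun hp1 => this hp1 h1⟩
        · exact Or.inr hp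
    · -- free at x
      intro c
      rw [hC₂x c]
      constructor
      · intro h w hw
        by_cases hw0 : w = f 0
        · rw [hw0] at hw; rw [h0] at hw; exact nomatch hw
        · by_cases hw1 : w = f 1
          · rw [hw1] at hw
            have : c = c₁ := by
              have := hw.symm.trans hc₁; exact (Option.some_injective _ this.symm).symm
            rw [this] at h
            exact h (f 0) hC₁_f0
          · have : C₁ x w = C x w := by
              refine hC₁_eq x w ?_ ?_
              · rintro (⟨-, h'⟩ | ⟨h', -⟩)
                · exact hw0 h'
                · exact hxf0 h'
              · rintro (⟨-, h'⟩ | ⟨h', -⟩)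
                · exact hw1 h'
                · exact hxf1 h'
            exact h w (this.trans hw)
      · intro h w hw
        by_cases hw0 : w = f 0
        · rw [hw0, hC₁_f0] at hw
          have : c = c₁ := Option.some_injective _ hw.symm
          rw [this] at h
          exact h (f 1) hc₁
        · by_cases hw1 : w = f 1
          · rw [hw1, hC₁_f1] at hw; exact nomatch hw
          · have : C₁ x w = C x w := by
              refine hC₁_eq x w ?_ ?_
              · rintro (⟨-, h'⟩ | ⟨h', -⟩)
                · exact hw0 h'
                · exact hxf0 h'
              · rintro (⟨-, h'⟩ | ⟨h', -⟩)
                · exact hw1 h'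
                · exact hxf1 h'
            rw [this] at hw
            exact h w hw
    · -- free at f (k+1)
      intro c hfc
      refine hC₂last c ?_
      intro w hw
      have hw : C₁ (f (k+1)) w = some c := hw
      have hne_x : f (k+1) ≠ x := (hfan.2.1 (k+1) le_rfl).ne'
      have hne_f0 : f (k+1) ≠ f 0 := fun h => by
        have := hfan.1 (k+1) le_rfl 0 (by omega) h; omega
      by_cases hp0 : Pr (f (k+1)) w x (f 0)
      · rcases hp0 with ⟨h', -⟩ | ⟨h', -⟩
        · exact hne_x h'
        · exact hne_f0 h'
      · by_cases hp1 : Pr (f (k+1)) w x (f 1)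
        · rcases hp1 with ⟨h', -⟩ | ⟨h', h''⟩
          · exact hne_x h'
          · rw [h', h'', hC₁prop.1 (f 1) x, hC₁_f1] at hw
            exact nomatch hw
        · rw [hC₁_eq _ _ hp0 hp1] at hw
          exact hfc w hw

theorem finishDom {C C₂ : V → V → Option (Fin n)} {x y z' : V} (γ : Fin n)
    (hdom : ∀ u w, C₂ u w = none ↔ ((C u w = none ∧ ¬ Pr u w x y) ∨ Pr u w x z')) :
    upd C₂ x z' (some γ) x y ≠ none ∧
      (∀ u w, C u w ≠ none → upd C₂ x z' (some γ) u w ≠ none) := by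
  constructor
  · by_cases hp : (x = x ∧ y = z') ∨ (x = z' ∧ y = x)
    · have hq : upd C₂ x z' (some γ) x y = some γ := by
        simp only [upd]; split_ifs with h
        · rfl
        · tauto
      rw [hq]; exact Option.some_ne_none _
    · rw [upd_of_ne _ _ hp]
      intro h
      rw [hdom] at h
      rcases h with ⟨-, hnp⟩ | hpz
      · exact hnp (Or.inl ⟨rfl, rfl⟩)
      · exact hp hpz
  · intro u w hne
    by_cases hp : (u = x ∧ w = z') ∨ (u = z' ∧ w = x)
    · have hq : upd C₂ x z' (some γ) u w = some γ := by
        simp only [upd]; rw [if_pos hp]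
      rw [hq]; exact Option.some_ne_none _
    · rw [upd_of_ne _ _ hp]
      intro h
      rw [hdom] at h
      rcases h with ⟨h1, -⟩ | hpz
      · exact hne h1
      · exact hp hpz

/-- The extension lemma: any partial proper coloring can be extended to also
color a given edge, keeping all previously colored edges colored. -/
theorem extend [Fintype V] [DecidableRel G.Adj] {C : V → V → Option (Fin n)}
    (hn : G.maxDegree < n) (hC : PropColor G C) {x y : V} (hxy : G.Adj x y) :
    ∃ C' : V → V → Option (Fin n),
      PropColor G C' ∧ C' x y ≠ none ∧ ∀ u w, C u w ≠ none → C' u w ≠ none := by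
  classical
  by_cases hcol : C x y = none
  case neg => exact ⟨C, hC, hcol, fun _ _ h => h⟩
  -- bound on fan length
  have hbd : ∀ (m : ℕ) (f : ℕ → V), IsFan G C x m f → m + 1 ≤ Fintype.card V := by
    intro m f hfan
    have := Finset.card_le_card_of_injOn (s := Finset.range (m+1)) (t := Finset.univ) f
      (fun i _ => Finset.mem_univ _)
      (fun i hi j hj he => by
        rw [Finset.mem_coe, Finset.mem_range] at hi hj
        exact hfan.1 i (by omega) j (by omega) he)
    simpa using this
  set N := Fintype.card V with hN
  set P : ℕ → Prop := fun m => ∃ f : ℕ → V, IsFan G C x m f ∧ f 0 = y with hP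
  have hP0 : P 0 :=
    ⟨fun _ => y, ⟨fun i hi j hj _ => by omega, fun i _ => hxy, fun i hi => by omega⟩, rfl⟩
  set k := Nat.findGreatest P N with hk
  have hPk : P k := Nat.findGreatest_spec (Nat.zero_le N) hP0
  obtain ⟨f, hfan, hf0⟩ := hPk
  obtain ⟨α, hα⟩ := exists_free hC x hn
  obtain ⟨β, hβ⟩ := exists_free hC (f k) hn
  have h0 : C x (f 0) = none := by rw [hf0]; exact hcol
  by_cases hfx : FreeC C x β
  · -- Case 1: β free at x too; rotate fully and color (x, f k) with β
    obtain ⟨C₂, hC₂prop, hC₂dom, hC₂x, hC₂last⟩ := rotate k C f hC hfan h0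
    refine ⟨upd C₂ x (f k) (some β),
      hC₂prop.upd_some (hfan.2.1 k le_rfl) ((hC₂x β).mpr hfx) (hC₂last β hβ), ?_, ?_⟩
    · exact (finishDom β (by rw [hf0] at hC₂dom; exact hC₂dom)).1
    · exact (finishDom β (by rw [hf0] at hC₂dom; exact hC₂dom)).2
  · -- Case 2: β is present at x
    have hz : ∃ z, C x z = some β := by
      unfold FreeC at hfx; push_neg at hfx
      simpa using hfx
    obtain ⟨z, hz⟩ := hz
    have hab : α ≠ β := fun h => hα z (by rw [h]; exact hz)
    -- z belongs to the fan
    have hjex : ∃ j, 1 ≤ j ∧ j ≤ k ∧ f j = z := by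
      by_contra hne
      push_neg at hne
      have hz0 : f 0 ≠ z := fun h => by rw [← h, h0] at hz; exact nomatch hz
      have hzf : ∀ i ≤ k, f i ≠ z := by
        intro i hi
        cases Nat.eq_zero_or_pos i with
        | inl h => rw [h]; exact hz0
        | inr h => exact hne i h hi
      set f' : ℕ → V := fun i => if i = k+1 then z else f i with hf'
      have hfan' : IsFan G C x (k+1) f' := by
        refine ⟨?_, ?_, ?_⟩
        · intro i hi j hj he
          simp only [hf'] at he
          split_ifs at he with h1 h2 h2
          · omega
          · exact absurd he.symm (hzf j (by omega))
          · exact absurd he (hzf i (by omega))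
          · exact hfan.1 i (by omega) j (by omega) he
        · intro i hi
          simp only [hf']
          split_ifs with h1
          · exact hC.2.1 x z (by rw [hz]; exact Option.some_ne_none _)
          · exact hfan.2.1 i (by omega)
        · intro i hi
          simp only [hf']
          rcases Nat.lt_or_ge i k with h | h
          · obtain ⟨c, hc, hfc⟩ := hfan.2.2 i h
            refine ⟨c, by rw [if_neg (by omega)]; exact hc, by rw [if_neg (by omega)]; exact hfc⟩
          · have hik : i = k := by omega
            refine ⟨β, by rw [hik, if_pos rfl]; exact hz, by rw [if_neg (by omega), hik]; exact hβ⟩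
      have hle : k + 1 ≤ N := by
        have := hbd (k+1) f' hfan'
        omega
      have : k + 1 ≤ k := Nat.le_findGreatest hle ⟨f', hfan', by simp [hf', hf0]⟩
      omega
    obtain ⟨j, hj1, hjk, hjz⟩ := hjex
    have hkpos : 1 ≤ k := le_trans hj1 hjk
    have hβj : FreeC C (f (j-1)) β := by
      obtain ⟨c, hc, hfc⟩ := hfan.2.2 (j-1) (by omega)
      have hj' : j - 1 + 1 = j := by omega
      rw [hj'] at hc
      have : c = β := by
        rw [hjz] at hc
        exact Option.some_injective _ (hc.symm.trans hz)
      rwa [← this]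
    set H := kgraph C α β with hH
    have hadjH : ∀ a b : V, (C a b = some α ∨ C a b = some β) → H.Adj a b := by
      intro a b hcab
      refine (kgraph_adj hC.1).mpr ⟨?_, hcab⟩
      exact hC.ne_self (by rcases hcab with h | h <;> rw [h] <;> exact Option.some_ne_none _)
    have hfkx : f k ≠ x := (hfan.2.1 k le_rfl).ne'
    have hfj1x : f (j-1) ≠ x := (hfan.2.1 (j-1) (by omega)).ne'
    have hfkj : f (j-1) ≠ f k := fun h => by
      have := hfan.1 (j-1) (by omega) k le_rfl h; omega
    have hcrux := crux (G := G) hC hab hfj1x hfkx hfkj hα hβj hβ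
    by_cases hreach : H.Reachable x (f (j-1))
    · -- S2: swap the component of f k, rotate the full fan, color (x, f k) with α
      set K : Set V := {a | H.Reachable (f k) a} with hK
      have hKcl : KClosed C α β K := by
        intro a ha b hcab
        exact SimpleGraph.Reachable.trans ha (hadjH a b hcab).reachable
      have hxK : x ∉ K := by
        intro hmem
        exact hcrux ⟨hreach, (SimpleGraph.Reachable.symm hmem)⟩
      have hfj1K : f (j-1) ∉ K := by
        intro hmem
        exact hcrux ⟨hreach, hreach.trans (SimpleGraph.Reachable.symm hmem)⟩
      set C₁ := swapC C α β K with hC₁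
      have hC₁prop : PropColor G C₁ := swapC_proper hC hKcl
      have hC₁x : ∀ w, C₁ x w = C x w := fun w => swapC_of_not_mem hxK w
      have hC₁fj1 : ∀ w, C₁ (f (j-1)) w = C (f (j-1)) w := fun w => swapC_of_not_mem hfj1K w
      have hfree_x : FreeC C₁ x α := fun w hw => hα w (by rw [← hC₁x w]; exact hw)
      have hfree_fk : FreeC C₁ (f k) α :=
        swapC_free_alpha hKcl hab (SimpleGraph.Reachable.refl _) hβ
      have hfan₁ : IsFan G C₁ x k f := by
        refine ⟨hfan.1, hfan.2.1, ?_⟩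
        intro i hi
        obtain ⟨c, hc, hfc⟩ := hfan.2.2 i hi
        refine ⟨c, by rw [hC₁x]; exact hc, ?_⟩
        by_cases hcα : c = α
        · exact absurd (by rw [← hcα]; exact hc) (hα (f (i+1)))
        · by_cases hcβ : c = β
          · have : f (i+1) = z := by
              refine hC.2.2 x (f (i+1)) z (by rw [hc]; exact Option.some_ne_none _) ?_
              rw [hc, hz, hcβ]
            have hij : i + 1 = j := by
              refine hfan.1 (i+1) (by omega) j (by omega) ?_
              rw [this, hjz]
            have hi1 : i = j - 1 := by omega
            rw [hi1, hcβ]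
            intro w hw
            rw [hC₁fj1 w] at hw
            exact hβj w hw
          · exact swapC_free_other hKcl hcα hcβ hfc
      have h0₁ : C₁ x (f 0) = none := by rw [hC₁x]; exact h0
      obtain ⟨C₂, hC₂prop, hC₂dom, hC₂x, hC₂last⟩ := rotate k C₁ f hC₁prop hfan₁ h0₁
      have hdom' : ∀ u w, C₂ u w = none ↔
          ((C u w = none ∧ ¬ Pr u w x y) ∨ Pr u w x (f k)) := by
        intro u w
        rw [hC₂dom u w, swapC_none_iff, hf0]
      refine ⟨upd C₂ x (f k) (some α),
        hC₂prop.upd_some (hfan.2.1 k le_rfl) ((hC₂x α).mpr hfree_x) (hC₂last α hfree_fk),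
        (finishDom α hdom').1, (finishDom α hdom').2⟩
    · -- S1: swap the component of f (j-1), rotate the prefix fan, color (x, f (j-1)) with α
      set K : Set V := {a | H.Reachable (f (j-1)) a} with hK
      have hKcl : KClosed C α β K := by
        intro a ha b hcab
        exact SimpleGraph.Reachable.trans ha (hadjH a b hcab).reachable
      have hxK : x ∉ K := fun hmem => hreach (SimpleGraph.Reachable.symm hmem)
      set C₁ := swapC C α β K with hC₁
      have hC₁prop : PropColor G C₁ := swapC_proper hC hKcl
      have hC₁x : ∀ w, C₁ x w = C x w := fun w => swapC_of_not_mem hxK w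
      have hfree_x : FreeC C₁ x α := fun w hw => hα w (by rw [← hC₁x w]; exact hw)
      have hfree_fj1 : FreeC C₁ (f (j-1)) α :=
        swapC_free_alpha hKcl hab (SimpleGraph.Reachable.refl _) hβj
      have hfan₁ : IsFan G C₁ x (j-1) f := by
        have hmono := hfan.mono (show j - 1 ≤ k by omega)
        refine ⟨hmono.1, hmono.2.1, ?_⟩
        intro i hi
        obtain ⟨c, hc, hfc⟩ := hmono.2.2 i hi
        refine ⟨c, by rw [hC₁x]; exact hc, ?_⟩
        by_cases hcα : c = α
        · exact absurd (by rw [← hcα]; exact hc) (hα (f (i+1)))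
        · by_cases hcβ : c = β
          · exfalso
            have : f (i+1) = z := by
              refine hC.2.2 x (f (i+1)) z (by rw [hc]; exact Option.some_ne_none _) ?_
              rw [hc, hz, hcβ]
            have hij : i + 1 = j := by
              refine hfan.1 (i+1) (by omega) j (by omega) ?_
              rw [this, hjz]
            omega
          · exact swapC_free_other hKcl hcα hcβ hfc
      have h0₁ : C₁ x (f 0) = none := by rw [hC₁x]; exact h0
      obtain ⟨C₂, hC₂prop, hC₂dom, hC₂x, hC₂last⟩ := rotate (j-1) C₁ f hC₁prop hfan₁ h0₁
      have hdom' : ∀ u w, C₂ u w = none ↔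
          ((C u w = none ∧ ¬ Pr u w x y) ∨ Pr u w x (f (j-1))) := by
        intro u w
        rw [hC₂dom u w, swapC_none_iff, hf0]
      refine ⟨upd C₂ x (f (j-1)) (some α),
        hC₂prop.upd_some (hfan.2.1 (j-1) (by omega)) ((hC₂x α).mpr hfree_x)
          (hC₂last α hfree_fj1),
        (finishDom α hdom').1, (finishDom α hdom').2⟩

end Fan

/-- Vizing's theorem (Δ+1 edge coloring), in matrix form. -/
theorem exists_coloring [Fintype V] (G : SimpleGraph V) [DecidableRel G.Adj]
    {n : ℕ} (hn : G.maxDegree < n) :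
    ∃ C : V → V → Option (Fin n), PropColor G C ∧ ∀ u v, G.Adj u v → C u v ≠ none := by
  classical
  have key : ∀ s : Finset (Sym2 V), ↑s ⊆ G.edgeSet →
      ∃ C : V → V → Option (Fin n), PropColor G C ∧
        ∀ u v, G.Adj u v → s(u, v) ∈ s → C u v ≠ none := by
    intro s
    induction s using Finset.induction_on with
    | empty =>
      intro _
      refine ⟨fun _ _ => none, ⟨fun _ _ => rfl, fun _ _ h => absurd rfl h,
        fun _ _ _ h _ => absurd rfl h⟩, fun u v _ h => absurd h (Finset.notMem_empty _)⟩
    | insert a t ha hIH =>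
      intro hsub
      have hasub : ↑t ⊆ G.edgeSet := by
        intro e he
        exact hsub (by simp [he])
      obtain ⟨C, hC, hcov⟩ := hIH hasub
      induction a using Sym2.ind with
      | _ u0 v0 =>
        have hadj : G.Adj u0 v0 := by
          have : s(u0, v0) ∈ G.edgeSet := hsub (by simp)
          rwa [SimpleGraph.mem_edgeSet] at this
        obtain ⟨C', hC', hcv', hpres⟩ := extend hn hC hadj
        refine ⟨C', hC', ?_⟩
        intro u v huv hmem
        rcases Finset.mem_insert.mp hmem with h | h
        · rw [Sym2.eq_iff] at h
          rcases h with ⟨rfl, rfl⟩ | ⟨rfl, rfl⟩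
          · exact hcv'
          · rw [hC'.1]; exact hcv'
        · exact hpres u v (hcov u v huv h)
  obtain ⟨C, hC, hcov⟩ := key G.edgeFinset (by simp)
  refine ⟨C, hC, fun u v huv => hcov u v huv ?_⟩
  rw [SimpleGraph.mem_edgeFinset, SimpleGraph.mem_edgeSet]
  exact huv


-- auxiliary modular lemma
theorem mod_hit {n : ℕ} (hn : 0 < n) {m : ℕ} (hm : m < n) (t : ℕ) :
    ∃ i < n, (t + i) % n = m := by
  have hr : t % n < n := Nat.mod_lt _ hn
  by_cases hrm : t % n ≤ m
  · refine ⟨m - t % n, by omega, ?_⟩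
    rw [Nat.add_mod, Nat.mod_eq_of_lt (show m - t % n < n by omega)]
    rw [show t % n + (m - t % n) = m by omega, Nat.mod_eq_of_lt hm]
  · refine ⟨n + m - t % n, by omega, ?_⟩
    rw [Nat.add_mod, Nat.mod_eq_of_lt (show n + m - t % n < n by omega)]
    rw [show t % n + (n + m - t % n) = n + m by omega, Nat.add_mod_left, Nat.mod_eq_of_lt hm]

theorem one_le_recTime (S : ℕ → Set (Sym2 V)) (e : Sym2 V) : 1 ≤ recTime S e := by
  have h0 : (0 : ℕ) ∈ {d : ℕ | ∃ t : ℕ, ∀ i < d, e ∉ S (t + i)} := ⟨0, fun i hi => by omega⟩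
  have := le_iSup₂ (f := fun (d : ℕ) (_ : d ∈ {d : ℕ | ∃ t : ℕ, ∀ i < d, e ∉ S (t + i)}) =>
    ((d : ℝ≥0∞) + 1)) 0 h0
  simpa [recTime] using this


/-- Colouring approximation (Theorem "Colouring approximation").
There is a valid schedule of heat at most (Δ+1)·g_max, hence a
min{((Δ+1)/Δ)·(g_max/g_min), Δ+1}-approximation. -/
theorem colouring_approximation {V : Type*} [Fintype V] [DecidableEq V]
    (G : SimpleGraph V) [DecidableRel G.Adj]
    (g : Sym2 V → ℝ) (hg : ∀ e ∈ G.edgeSet, 0 < g e)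
    (hne : G.edgeFinset.Nonempty) (hΔ : 1 ≤ G.maxDegree) :
    ∃ S : ℕ → Set (Sym2 V), OPSValid G S ∧
      heat G g S ≤ ENNReal.ofReal (((G.maxDegree : ℝ) + 1) * G.edgeFinset.sup' hne g) ∧
      ∀ S' : ℕ → Set (Sym2 V), OPSValid G S' →
        heat G g S ≤
          ENNReal.ofReal (min
              ((((G.maxDegree : ℝ) + 1) / (G.maxDegree : ℝ)) *
                (G.edgeFinset.sup' hne g / G.edgeFinset.inf' hne g))
              ((G.maxDegree : ℝ) + 1)) * heat G g S' := by
  classical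
  set Δ := G.maxDegree with hΔdef
  set n := Δ + 1 with hn
  obtain ⟨C, hC, hcov⟩ := exists_coloring G (show G.maxDegree < n by omega)
  set gmax := G.edgeFinset.sup' hne g with hgmax
  set gmin := G.edgeFinset.inf' hne g with hgmin
  -- the color index of an edge
  set colIdx : Sym2 V → ℕ := Sym2.lift ⟨fun u v => (C u v).elim 0 Fin.val,
    fun u v => by
      show (C u v).elim 0 Fin.val = (C v u).elim 0 Fin.val
      rw [hC.1 u v]⟩ with hcolIdx
  set S : ℕ → Set (Sym2 V) := fun t => {e | e ∈ G.edgeSet ∧ colIdx e = t % n} with hS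
  -- validity
  have hvalid : OPSValid G S := by
    intro t
    constructor
    · intro e he; exact he.1
    · intro e he e' he' hnee v hv hv'
      obtain ⟨a, rfl⟩ := Sym2.mem_iff_exists.mp hv
      obtain ⟨b, rfl⟩ := Sym2.mem_iff_exists.mp hv'
      have hadja : G.Adj v a := (SimpleGraph.mem_edgeSet G).mp he.1
      have hadjb : G.Adj v b := (SimpleGraph.mem_edgeSet G).mp he'.1
      obtain ⟨ca, hca⟩ := Option.ne_none_iff_exists'.mp (hcov v a hadja)
      obtain ⟨cb, hcb⟩ := Option.ne_none_iff_exists'.mp (hcov v b hadjb)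
      have hia : colIdx s(v, a) = ca.val := by simp [hcolIdx, Sym2.lift_mk, hca]
      have hib : colIdx s(v, b) = cb.val := by simp [hcolIdx, Sym2.lift_mk, hcb]
      have : ca.val = cb.val := by
        rw [← hia, ← hib, he.2, he'.2]
      have hcc : ca = cb := Fin.val_injective this
      have : a = b := hC.2.2 v a b (by rw [hca]; exact Option.some_ne_none _)
        (by rw [hca, hcb, hcc])
      exact hnee (by rw [this])
  -- every edge occurs in every window of n consecutive days
  have hhit : ∀ e ∈ G.edgeSet, ∀ t : ℕ, ∃ i < n, e ∈ S (t + i) := by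
    intro e he t
    have hm : colIdx e < n := by
      induction e using Sym2.ind with
      | _ u v =>
        have hadj : G.Adj u v := (SimpleGraph.mem_edgeSet G).mp he
        obtain ⟨c, hc⟩ := Option.ne_none_iff_exists'.mp (hcov u v hadj)
        have : colIdx s(u, v) = c.val := by simp [hcolIdx, Sym2.lift_mk, hc]
        rw [this]; exact c.isLt
    obtain ⟨i, hi, hieq⟩ := mod_hit (show 0 < n by omega) hm t
    exact ⟨i, hi, he, hieq.symm⟩
  -- recurrence time bound for the constructed schedule
  have hrec : ∀ e ∈ G.edgeSet, recTime S e ≤ (n : ℝ≥0∞) := by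
    intro e he
    rw [recTime]
    apply iSup₂_le
    intro d hd
    obtain ⟨t, ht⟩ := hd
    have hdn : d < n := by
      by_contra hcon
      push_neg at hcon
      obtain ⟨i, hi, hmem⟩ := hhit e he t
      exact ht i (by omega) hmem
    have hcast : ((d + 1 : ℕ) : ℝ≥0∞) ≤ ((n : ℕ) : ℝ≥0∞) := Nat.cast_le.mpr (by omega)
    calc ((d : ℝ≥0∞) + 1) = ((d + 1 : ℕ) : ℝ≥0∞) := by push_cast; ring
      _ ≤ ((n : ℕ) : ℝ≥0∞) := hcast
  -- positivity facts
  obtain ⟨emax, hemax, hgmaxeq⟩ := Finset.exists_mem_eq_sup' hne g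
  rw [← hgmax] at hgmaxeq
  have hgmaxpos : 0 < gmax := by
    rw [hgmaxeq]
    exact hg emax (SimpleGraph.mem_edgeFinset.mp hemax)
  have hgminpos : 0 < gmin := by
    rw [hgmin]
    rw [Finset.lt_inf'_iff]
    exact fun b hb => hg b (SimpleGraph.mem_edgeFinset.mp hb)
  -- upper bound for the heat of S
  have hheatS : heat G g S ≤ ENNReal.ofReal (((Δ : ℝ) + 1) * gmax) := by
    rw [heat]
    apply iSup₂_le
    intro e he
    have h1 : ENNReal.ofReal (g e) ≤ ENNReal.ofReal gmax :=
      ENNReal.ofReal_le_ofReal (Finset.le_sup' g (SimpleGraph.mem_edgeFinset.mpr he))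
    have h2 : ENNReal.ofReal (g e) * recTime S e ≤ ENNReal.ofReal gmax * (n : ℝ≥0∞) :=
      mul_le_mul' h1 (hrec e he)
    refine h2.trans (le_of_eq ?_)
    rw [show ((n : ℕ) : ℝ≥0∞) = ENNReal.ofReal ((n : ℕ) : ℝ) from (ENNReal.ofReal_natCast n).symm]
    rw [← ENNReal.ofReal_mul hgmaxpos.le]
    congr 1
    rw [hn]
    push_cast
    ring
  refine ⟨S, hvalid, hheatS, ?_⟩
  -- lower bounds for arbitrary valid schedules
  intro S' hS'
  -- (a) ofReal gmax ≤ heat S'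
  have hLmax : ENNReal.ofReal gmax ≤ heat G g S' := by
    have hmem : emax ∈ G.edgeSet := SimpleGraph.mem_edgeFinset.mp hemax
    have h1 : ENNReal.ofReal gmax ≤ ENNReal.ofReal (g emax) * recTime S' emax := by
      calc ENNReal.ofReal gmax = ENNReal.ofReal (g emax) * 1 := by rw [hgmaxeq, mul_one]
        _ ≤ _ := mul_le_mul' le_rfl (one_le_recTime S' emax)
    refine h1.trans ?_
    rw [heat]
    exact le_iSup₂ (f := fun e (_ : e ∈ G.edgeSet) => ENNReal.ofReal (g e) * recTime S' e)
      emax hmem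
  -- (b) ofReal gmin * Δ ≤ heat S'
  have hLmin : ENNReal.ofReal gmin * (Δ : ℝ≥0∞) ≤ heat G g S' := by
    have hnonempty : Nonempty V := by
      obtain ⟨e, he⟩ := hne
      induction e using Sym2.ind with
      | _ u v => exact ⟨u⟩
    obtain ⟨w, hw⟩ := G.exists_maximal_degree_vertex
    have hcardN : (G.neighborFinset w).card = Δ := by
      rw [SimpleGraph.card_neighborFinset_eq_degree, hΔdef, hw]
    have hmiss : ∃ u ∈ G.neighborFinset w, ∀ i < Δ - 1, s(w, u) ∉ S' (0 + i) := by
      by_contra hcon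
      push_neg at hcon
      choose! F h1 h2 using hcon
      have hinj : Set.InjOn F (G.neighborFinset w) := by
        intro u hu u' hu' heq
        rw [Finset.mem_coe, SimpleGraph.mem_neighborFinset] at hu hu'
        by_contra hneq
        have hne_edges : s(w, u) ≠ s(w, u') := by
          rw [Ne, Sym2.eq_iff]
          rintro (⟨-, h⟩ | ⟨h, -⟩)
          · exact hneq h
          · exact G.loopless.irrefl w (h ▸ hu')
        have hmem1 : s(w, u) ∈ S' (0 + F u) :=
          h2 u ((SimpleGraph.mem_neighborFinset _ _ _).mpr hu)
        have hmem2 : s(w, u') ∈ S' (0 + F u) := by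
          rw [heq]
          exact h2 u' ((SimpleGraph.mem_neighborFinset _ _ _).mpr hu')
        have := (hS' (0 + F u)).2 hmem1 hmem2 hne_edges w (by simp) (by simp)
        exact this
      have hmap : ∀ u ∈ G.neighborFinset w, F u ∈ Finset.range (Δ - 1) := by
        intro u hu
        rw [Finset.mem_range]
        exact h1 u hu
      have := Finset.card_le_card_of_injOn F hmap hinj
      rw [hcardN, Finset.card_range] at this
      omega
    obtain ⟨u, hu, hmiss⟩ := hmiss
    have hadj : G.Adj w u := (SimpleGraph.mem_neighborFinset _ _ _).mp hu
    have hmemE : s(w, u) ∈ G.edgeSet := (SimpleGraph.mem_edgeSet G).mpr hadj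
    have hd : (Δ - 1 : ℕ) ∈ {d : ℕ | ∃ t : ℕ, ∀ i < d, s(w, u) ∉ S' (t + i)} :=
      ⟨0, hmiss⟩
    have hrecge : (Δ : ℝ≥0∞) ≤ recTime S' s(w, u) := by
      have := le_iSup₂ (f := fun (d : ℕ)
        (_ : d ∈ {d : ℕ | ∃ t : ℕ, ∀ i < d, s(w, u) ∉ S' (t + i)}) => ((d : ℝ≥0∞) + 1))
        (Δ - 1) hd
      rw [recTime]
      refine le_trans (le_of_eq ?_) this
      rw [show ((Δ - 1 : ℕ) : ℝ≥0∞) + 1 = (((Δ - 1) + 1 : ℕ) : ℝ≥0∞) by push_cast; ring]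
      congr 1
      omega
    have h1 : ENNReal.ofReal gmin * (Δ : ℝ≥0∞) ≤
        ENNReal.ofReal (g s(w, u)) * recTime S' s(w, u) :=
      mul_le_mul' (ENNReal.ofReal_le_ofReal
        (Finset.inf'_le g (SimpleGraph.mem_edgeFinset.mpr hmemE))) hrecge
    refine h1.trans ?_
    rw [heat]
    exact le_iSup₂ (f := fun e (_ : e ∈ G.edgeSet) => ENNReal.ofReal (g e) * recTime S' e)
      s(w, u) hmemE
  -- final arithmetic
  set a : ℝ := (((Δ : ℝ) + 1) / (Δ : ℝ)) * (gmax / gmin) with ha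
  set b : ℝ := (Δ : ℝ) + 1 with hb
  have hΔR : (0 : ℝ) < (Δ : ℝ) := by
    have : (1 : ℕ) ≤ Δ := hΔ
    exact_mod_cast Nat.pos_of_ne_zero (by omega)
  have hapos : 0 ≤ a := by positivity
  have hbpos : 0 ≤ b := by positivity
  have hgoal_b : ENNReal.ofReal (((Δ : ℝ) + 1) * gmax) ≤ ENNReal.ofReal b * heat G g S' := by
    calc ENNReal.ofReal (((Δ : ℝ) + 1) * gmax) = ENNReal.ofReal b * ENNReal.ofReal gmax := by
          rw [← ENNReal.ofReal_mul hbpos]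
      _ ≤ ENNReal.ofReal b * heat G g S' := mul_le_mul' le_rfl hLmax
  have hgoal_a : ENNReal.ofReal (((Δ : ℝ) + 1) * gmax) ≤ ENNReal.ofReal a * heat G g S' := by
    have key : ENNReal.ofReal (((Δ : ℝ) + 1) * gmax) =
        ENNReal.ofReal a * (ENNReal.ofReal gmin * (Δ : ℝ≥0∞)) := by
      rw [show ((Δ : ℕ) : ℝ≥0∞) = ENNReal.ofReal ((Δ : ℕ) : ℝ) from (ENNReal.ofReal_natCast Δ).symm]
      rw [← ENNReal.ofReal_mul hgminpos.le, ← ENNReal.ofReal_mul hapos]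
      congr 1
      rw [ha]
      field_simp
      ring
    rw [key]
    exact mul_le_mul' le_rfl hLmin
  calc heat G g S ≤ ENNReal.ofReal (((Δ : ℝ) + 1) * gmax) := hheatS
    _ ≤ ENNReal.ofReal (min a b) * heat G g S' := by
        rcases le_total a b with hab | hab
        · rw [min_eq_left hab]; exact hgoal_a
        · rw [min_eq_right hab]; exact hgoal_b


end PolySched
end

section
/- The DPS instance on the complete graph K₃ (three persons A, B, C with the three relationships A–B, B–C, A–C) in which every edge has frequency 2 admits no valid schedule, even though for each person the local Pinwheel instance with frequencies (2,2) is feasible. -/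
open scoped ENNReal BigOperators

namespace PolySched

variable {V : Type*}

theorem IsMatchingIn.eq_of_mem_of_mem {G : SimpleGraph V} {M : Set (Sym2 V)}
    (hM : IsMatchingIn G M) {e e' : Sym2 V} (he : e ∈ M) (he' : e' ∈ M) {v : V}
    (hv : v ∈ e) (hv' : v ∈ e') : e = e' := by
  by_contra hne
  exact hM.2 he he' hne v hv hv'

/-- Pairwise-intersecting edges cannot share a day, and each needs one of the first `k` days. -/
theorem DPSValid.card_le_of_pairwise_intersect {G : SimpleGraph V} {f : Sym2 V → ℕ}
    {S : ℕ → Set (Sym2 V)} (hS : DPSValid G f S) {E : Finset (Sym2 V)} {k : ℕ}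
    (hEG : ∀ e ∈ E, e ∈ G.edgeSet) (hEf : ∀ e ∈ E, f e ≤ k)
    (hE : (E : Set (Sym2 V)).Pairwise fun e e' => ∃ v, v ∈ e ∧ v ∈ e') : E.card ≤ k := by
  have hday : ∀ e ∈ E, ∃ d < k, e ∈ S d := fun e he => by
    obtain ⟨i, hi, hmem⟩ := hS.2 e (hEG e he) 0
    exact ⟨i, hi.trans_le (hEf e he), by simpa using hmem⟩
  choose! day hday_lt hday_mem using hday
  have hinj : Set.InjOn day E := by
    intro e he e' he' hdd
    by_contra hne
    obtain ⟨v, hv, hv'⟩ := hE he he' hne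
    exact hne ((hS.1 (day e)).eq_of_mem_of_mem (hday_mem e he) (hdd ▸ hday_mem e' he') hv hv')
  simpa using Finset.card_le_card_of_injOn (t := Finset.range k) day
    (fun e he => Finset.mem_range.2 (hday_lt e he)) hinj

def roundRobin (k : ℕ) [NeZero k] (t : ℕ) : Fin k := Fin.ofNat k t

theorem exists_lt_roundRobin_add_eq (k : ℕ) [NeZero k] (i : Fin k) (t : ℕ) :
    ∃ j < k, roundRobin k (t + j) = i := by
  have hk : 0 < k := Nat.pos_of_neZero k
  refine ⟨(i + (k - t % k)) % k, Nat.mod_lt _ hk, Fin.ext ?_⟩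
  have hsum : t + (i + (k - t % k)) = i + k * (t / k + 1) := by
    have := Nat.div_add_mod t k
    have := Nat.mod_lt t hk
    rw [Nat.mul_succ]
    omega
  simp only [roundRobin, Fin.val_ofNat]
  rw [Nat.add_mod_mod, hsum, Nat.add_mul_mod_self_left, Nat.mod_eq_of_lt i.isLt]

/-- The DPS instance on the triangle K₃ with all frequencies 2
admits no valid schedule, although each person's local Pinwheel instance with
frequencies (2,2) is feasible. -/
theorem triangle_infeasible :
    (¬ ∃ S : ℕ → Set (Sym2 (Fin 3)),
        DPSValid (⊤ : SimpleGraph (Fin 3)) (fun _ => 2) S) ∧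
    (∃ S : ℕ → Fin 2, ∀ (i : Fin 2) (t : ℕ), ∃ j < 2, S (t + j) = i) := by
  refine ⟨?_, ⟨roundRobin 2, exists_lt_roundRobin_add_eq 2⟩⟩
  rintro ⟨S, hS⟩
  have hcard := hS.card_le_of_pairwise_intersect (E := {s(0, 1), s(1, 2), s(0, 2)}) (k := 2)
    (by decide) (fun _ _ => le_rfl) (by simp [Set.Pairwise])
  simp at hcard

end PolySched
end
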